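/- arXiv:nlin/0305057 — 6 statements merged into one kernel-verified Lean document; each statement's English description precedes it below -/
import Mathlib

section
/- Let z_1, z_2, z_3 ∈ ℂ be pairwise distinct. Then the rational Calogero–Moser locus conditions Σ_{j'≠j} (z_j - z_{j'})^{-3} = 0 for j = 1,2,3 hold if and only if s_1(z_1,z_2,z_3)² - 3 s_2(z_1,z_2,z_3) = 0, i.e., (z_1+z_2+z_3)² = 3(z_1²+z_2²+z_3²). -/
/-- For pairwise distinct `z₁, z₂, z₃ ∈ ℂ`, the rational Calogero–Moser locus
conditions `Σ_{j'≠j} (z_j - z_{j'})⁻³ = 0` (for `j = 1,2,3`) hold if and only if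
`(z₁+z₂+z₃)² = 3 (z₁²+z₂²+z₃²)`. -/
theorem cm_locus_three_points (z₁ z₂ z₃ : ℂ)
    (h12 : z₁ ≠ z₂) (h13 : z₁ ≠ z₃) (h23 : z₂ ≠ z₃) :
    (((z₁ - z₂) ^ 3)⁻¹ + ((z₁ - z₃) ^ 3)⁻¹ = 0 ∧
     ((z₂ - z₁) ^ 3)⁻¹ + ((z₂ - z₃) ^ 3)⁻¹ = 0 ∧
     ((z₃ - z₁) ^ 3)⁻¹ + ((z₃ - z₂) ^ 3)⁻¹ = 0) ↔
    (z₁ + z₂ + z₃) ^ 2 = 3 * (z₁ ^ 2 + z₂ ^ 2 + z₃ ^ 2) := by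
  have a12 : (z₁ - z₂) ^ 3 ≠ 0 := pow_ne_zero _ (sub_ne_zero.2 h12)
  have a13 : (z₁ - z₃) ^ 3 ≠ 0 := pow_ne_zero _ (sub_ne_zero.2 h13)
  have a21 : (z₂ - z₁) ^ 3 ≠ 0 := pow_ne_zero _ (sub_ne_zero.2 (Ne.symm h12))
  have a23 : (z₂ - z₃) ^ 3 ≠ 0 := pow_ne_zero _ (sub_ne_zero.2 h23)
  have a31 : (z₃ - z₁) ^ 3 ≠ 0 := pow_ne_zero _ (sub_ne_zero.2 (Ne.symm h13))
  have a32 : (z₃ - z₂) ^ 3 ≠ 0 := pow_ne_zero _ (sub_ne_zero.2 (Ne.symm h23))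
  constructor
  · rintro ⟨e1, e2, e3⟩
    rw [inv_add_inv a12 a13, div_eq_zero_iff] at e1
    rw [inv_add_inv a21 a23, div_eq_zero_iff] at e2
    have p1 : (z₁ - z₂) ^ 3 + (z₁ - z₃) ^ 3 = 0 :=
      e1.resolve_right (mul_ne_zero a12 a13)
    have p2 : (z₂ - z₁) ^ 3 + (z₂ - z₃) ^ 3 = 0 :=
      e2.resolve_right (mul_ne_zero a21 a23)
    have key : (z₁ - z₂) * ((z₁ + z₂ + z₃) ^ 2 - 3 * (z₁ ^ 2 + z₂ ^ 2 + z₃ ^ 2)) = 0 := by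
      linear_combination (-(2:ℂ)/3) * p1 + ((2:ℂ)/3) * p2
    rcases mul_eq_zero.1 key with h | h
    · exact absurd (sub_eq_zero.1 h) h12
    · linear_combination h
  · intro h
    have g : (z₁ - z₂) ^ 2 + (z₁ - z₂) * (z₂ - z₃) + (z₂ - z₃) ^ 2 = 0 := by
      linear_combination (-(1:ℂ)/2) * h
    refine ⟨?_, ?_, ?_⟩
    · rw [inv_add_inv a12 a13, div_eq_zero_iff]
      left
      linear_combination (2 * (z₁ - z₂) + (z₂ - z₃)) * g
    · rw [inv_add_inv a21 a23, div_eq_zero_iff]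
      left
      linear_combination ((z₂ - z₃) - (z₁ - z₂)) * g
    · rw [inv_add_inv a31 a32, div_eq_zero_iff]
      left
      linear_combination (-((z₁ - z₂) + 2 * (z₂ - z₃))) * g
end

section
/- With n_1 < ⋯ < n_g positive integers and v ∈ (ℂ*)^g, define τ_N(n,v,u) = (-1)^{⌊g/2⌋} det(T(n,v,u))/θ(n_1,…,n_g) = Σ_{k=0}^N r_k(v) u^k where N = Σ_p n_p. Then r_0(v) = 1, r_N(v) = (-1)^{⌊g/2⌋} v_1⋯v_g, each r_k(v) is a polynomial of degree at most 1 in each individual variable v_p, and assigning weight n_p to v_p, r_k is isobaric of weight k. Moreover, for any σ ∈ {0,1}^g with n·σ = k, the coefficient of v_1^{σ_1}⋯v_g^{σ_g} in r_k is nonzero. -/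
open Finset

/-- The Vandermonde determinant `θ(a₁,…,a_g) = ∏_{p<p'} (a_{p'} - a_p)`. -/
noncomputable def vdm {g : ℕ} (a : Fin g → ℂ) : ℂ :=
  ∏ p : Fin g, ∏ p' ∈ Finset.Ioi p, (a p' - a p)

/-- The `g×g` matrix `T(n,v,u)` with entries
`T_{p,p'} = n_{p'}^{p-1} (v_{p'} u^{n_{p'}} - (-1)^p)`. -/
noncomputable def matT {g : ℕ} (n : Fin g → ℕ) (v : Fin g → ℂ) (u : ℂ) :
    Matrix (Fin g) (Fin g) ℂ :=
  fun p p' => (n p' : ℂ) ^ (p : ℕ) * (v p' * u ^ (n p') - (-1 : ℂ) ^ ((p : ℕ) + 1))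

/-!
The `p`-th column of `T(n,v,u)` is `v_p u^{n_p}` times the Vandermonde column at the node `n_p`
plus the Vandermonde column at the node `-n_p`. Expanding the determinant multilinearly over these
two choices per column gives `det T = Σ_σ θ(±n) v^σ u^{n·σ}`, where the node of column `p` is
`n_p` if `σ_p` holds and `-n_p` otherwise. Comparing coefficients of `u^k` yields
`r_k(v) = Σ_{n·σ = k} (-1)^{⌊g/2⌋} θ(±n)/θ(n) v^σ`. These coefficients are nonzero because
the `±n_p` are distinct when all `n_p > 0`; for `σ = 0` the sign cancels, since
`θ(-n) = (-1)^{g(g-1)/2} θ(n)` and `g(g-1)/2 ≡ ⌊g/2⌋ (mod 2)`.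
-/

open Matrix

variable {g : ℕ}

theorem eq_sum_ite_of_forall_sum_range_mul_pow_eq {R ι : Type*} [CommRing R] [IsDomain R]
    [Infinite R] {N : ℕ} {b : ℕ → R} {s : Finset ι} {a : ι → R} {w : ι → ℕ}
    (h : ∀ u, ∑ k ∈ range (N + 1), b k * u ^ k = ∑ i ∈ s, a i * u ^ w i)
    {k : ℕ} (hk : k ≤ N) :
    b k = ∑ i ∈ s, if w i = k then a i else 0 := by
  open Polynomial in
  have hpoly : ∑ j ∈ range (N + 1), C (b j) * X ^ j = ∑ i ∈ s, C (a i) * X ^ w i :=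
    Polynomial.funext fun u => by simpa [eval_finsetSum] using h u
  simpa [finsetSum_coeff, coeff_C_mul_X_pow, Nat.lt_succ_of_le hk, eq_comm] using
    congrArg (coeff · k) hpoly

def weight (n : Fin g → ℕ) (σ : Fin g → Bool) : ℕ := ∑ p, if σ p then n p else 0

theorem weight_add_weight_not (n : Fin g → ℕ) (σ : Fin g → Bool) :
    weight n σ + weight n (fun p => !σ p) = ∑ p, n p := by
  rw [weight, weight, ← sum_add_distrib]
  exact sum_congr rfl fun p _ => by cases σ p <;> simp

theorem eq_false_of_weight_eq_zero {n : Fin g → ℕ} (hpos : ∀ p, 0 < n p) {σ : Fin g → Bool}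
    (hσ : weight n σ = 0) : σ = fun _ => false := by
  funext p
  have := (sum_eq_zero_iff.mp hσ) p (mem_univ p)
  cases hp : σ p
  · rfl
  · simp [hp, (hpos p).ne'] at this

theorem eq_true_of_weight_eq_sum {n : Fin g → ℕ} (hpos : ∀ p, 0 < n p) {σ : Fin g → Bool}
    (hσ : weight n σ = ∑ p, n p) : σ = fun _ => true := by
  have hnot := eq_false_of_weight_eq_zero hpos
    (by have := weight_add_weight_not n σ; omega : weight n (fun p => !σ p) = 0)
  funext p
  simpa using congrFun hnot p

def signedCast {R : Type*} [Ring R] (n : Fin g → ℕ) (σ : Fin g → Bool) : Fin g → R :=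
  fun p => if σ p then (n p : R) else -(n p : R)

theorem signedCast_injective {R : Type*} [Ring R] [CharZero R] {n : Fin g → ℕ}
    (hn : Function.Injective n) (hpos : ∀ p, 0 < n p) (σ : Fin g → Bool) :
    Function.Injective (signedCast (R := R) n σ) := by
  have hsum (p q : Fin g) : (n p : R) + n q ≠ 0 := by
    exact_mod_cast (Nat.add_pos_left (hpos p) _).ne'
  intro p q hpq
  cases hp : σ p <;> cases hq : σ q <;> simp only [signedCast, hp, hq] at hpq
  · exact hn (by simpa using hpq)
  · exact absurd (neg_eq_iff_add_eq_zero.mp hpq) (hsum p q)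
  · exact absurd (eq_neg_iff_add_eq_zero.mp hpq) (hsum p q)
  · exact hn (by simpa using hpq)

theorem prod_range_neg_one_pow {R : Type*} [CommMonoid R] [HasDistribNeg R] (g : ℕ) :
    ∏ j ∈ range g, (-1 : R) ^ j = (-1) ^ (g / 2) := by
  induction g using Nat.twoStepInduction with
  | zero => simp
  | one => simp
  | more g ih _ =>
    rw [prod_range_succ, prod_range_succ, ih, mul_assoc, ← pow_add,
      show g + (g + 1) = 2 * g + 1 by ring, pow_succ, pow_mul, neg_one_sq, one_pow, one_mul,
      ← pow_succ, show (g + 1 + 1) / 2 = g / 2 + 1 by omega]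

theorem det_vandermonde_neg {R : Type*} [CommRing R] (x : Fin g → R) :
    det (vandermonde (-x)) = (-1) ^ (g / 2) * det (vandermonde x) := by
  have : vandermonde (-x) = of fun i j : Fin g => (-1 : R) ^ (j : ℕ) * vandermonde x i j := by
    ext i j
    rw [of_apply, vandermonde_apply, vandermonde_apply, Pi.neg_apply, neg_pow]
  rw [this, det_mul_row, Fin.prod_univ_eq_prod_range (fun j => (-1 : R) ^ j),
    prod_range_neg_one_pow]

theorem vdm_eq_det_vandermonde (a : Fin g → ℂ) : vdm a = det (vandermonde a) :=
  (det_vandermonde a).symm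

theorem vdm_ne_zero_iff {a : Fin g → ℂ} : vdm a ≠ 0 ↔ Function.Injective a := by
  rw [vdm_eq_det_vandermonde, det_vandermonde_ne_zero_iff]

theorem det_matT (n : Fin g → ℕ) (v : Fin g → ℂ) (u : ℂ) :
    det (matT n v u) = ∑ σ : Fin g → Bool,
      vdm (signedCast n σ) * ((∏ p, if σ p then v p else 1) * u ^ weight n σ) := by
  let rowFactor (p : Fin g) (b : Bool) : ℂ := if b then v p * u ^ n p else 1
  have hrows : (matT n v u)ᵀ = fun p => ∑ b : Bool,
      rowFactor p b • vandermonde (signedCast n (fun _ => b)) p := by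
    ext p j
    simp only [transpose_apply, matT, Fintype.sum_bool, if_true, Bool.false_eq_true, if_false,
      Pi.add_apply, Pi.smul_apply, vandermonde_apply, smul_eq_mul, signedCast, rowFactor,
      neg_pow (n p : ℂ)]
    ring
  have hterm (σ : Fin g → Bool) :
      (fun p => rowFactor p (σ p) • vandermonde (signedCast n (fun _ => σ p)) p) =
        of fun p j => rowFactor p (σ p) * vandermonde (signedCast n σ) p j := by
    ext p j; simp [signedCast]
  have hfactor (σ : Fin g → Bool) :
      ∏ p, rowFactor p (σ p) = (∏ p, if σ p then v p else 1) * u ^ weight n σ := by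
    rw [weight, ← prod_pow_eq_pow_sum, ← prod_mul_distrib]
    exact prod_congr rfl fun p _ => by cases σ p <;> simp [rowFactor]
  rw [← det_transpose, hrows]
  refine (detRowAlternating.toMultilinearMap.map_sum _).trans (sum_congr rfl fun σ _ => ?_)
  change det _ = _
  rw [hterm, det_mul_column, det_vandermonde, hfactor, vdm, mul_comm]

noncomputable def tauCoeff (n : Fin g → ℕ) (σ : Fin g → Bool) : ℂ :=
  (-1) ^ (g / 2) * vdm (signedCast n σ) / vdm (fun p => (n p : ℂ))

section tauCoeff

variable {n : Fin g → ℕ}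

theorem vdm_natCast_ne_zero (hn : Function.Injective n) : vdm (fun p => (n p : ℂ)) ≠ 0 :=
  vdm_ne_zero_iff.mpr (Nat.cast_injective.comp hn)

theorem tauCoeff_ne_zero (hn : Function.Injective n) (hpos : ∀ p, 0 < n p) (σ : Fin g → Bool) :
    tauCoeff n σ ≠ 0 :=
  div_ne_zero (mul_ne_zero (pow_ne_zero _ (by norm_num))
    (vdm_ne_zero_iff.mpr (signedCast_injective hn hpos σ))) (vdm_natCast_ne_zero hn)

theorem tauCoeff_all_false (hn : Function.Injective n) : tauCoeff n (fun _ => false) = 1 := by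
  have hneg : signedCast n (fun _ => false) = -fun p => (n p : ℂ) := by
    funext p; simp [signedCast]
  rw [tauCoeff, hneg, vdm_eq_det_vandermonde, det_vandermonde_neg, ← vdm_eq_det_vandermonde,
    ← mul_assoc, ← pow_add, Even.neg_one_pow ⟨_, rfl⟩, one_mul,
    div_self (vdm_natCast_ne_zero hn)]

theorem tauCoeff_all_true (hn : Function.Injective n) :
    tauCoeff n (fun _ => true) = (-1) ^ (g / 2) := by
  rw [tauCoeff, mul_div_assoc]
  exact mul_right_eq_self₀.mpr (Or.inl (div_self (vdm_natCast_ne_zero hn)))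

theorem coeff_eq_sum_tauCoeff (hn : Function.Injective n) {N : ℕ}
    {r : ℕ → (Fin g → ℂ) → ℂ}
    (hr : ∀ (v : Fin g → ℂ) (u : ℂ),
      (-1 : ℂ) ^ (g / 2) * det (matT n v u) =
        vdm (fun p => (n p : ℂ)) * ∑ k ∈ range (N + 1), r k v * u ^ k)
    {k : ℕ} (hk : k ≤ N) (v : Fin g → ℂ) :
    r k v = ∑ σ : Fin g → Bool,
      (if weight n σ = k then tauCoeff n σ else 0) * ∏ p, if σ p then v p else 1 := by
  have hexpand (u : ℂ) : ∑ k ∈ range (N + 1), r k v * u ^ k = ∑ σ : Fin g → Bool,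
      tauCoeff n σ * (∏ p, if σ p then v p else 1) * u ^ weight n σ := by
    have hθ := vdm_natCast_ne_zero hn
    refine mul_left_cancel₀ hθ ?_
    rw [← hr, det_matT, mul_sum, mul_sum]
    refine sum_congr rfl fun σ _ => ?_
    rw [tauCoeff]
    field_simp
  rw [eq_sum_ite_of_forall_sum_range_mul_pow_eq hexpand hk]
  simp only [ite_mul, zero_mul]

end tauCoeff

theorem tau_coefficients_properties_general (g : ℕ) (n : Fin g → ℕ)
    (hmono : StrictMono n) (hpos : ∀ p, 0 < n p)
    (N : ℕ) (hN : N = ∑ p, n p)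
    (r : ℕ → (Fin g → ℂ) → ℂ)
    (hr : ∀ (v : Fin g → ℂ) (u : ℂ),
      (-1 : ℂ) ^ (g / 2) * Matrix.det (matT n v u) =
        vdm (fun p => (n p : ℂ)) * ∑ k ∈ Finset.range (N + 1), r k v * u ^ k) :
    (∀ v : Fin g → ℂ, r 0 v = 1) ∧
    (∀ v : Fin g → ℂ, r N v = (-1 : ℂ) ^ (g / 2) * ∏ p, v p) ∧
    (∀ k : ℕ, k ≤ N → ∃ c : (Fin g → Bool) → ℂ,
      (∀ σ : Fin g → Bool, (∑ p, if σ p then n p else 0) = k → c σ ≠ 0) ∧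
      (∀ v : Fin g → ℂ,
        r k v = ∑ σ : Fin g → Bool,
          (if (∑ p, if σ p then n p else 0) = k then c σ else 0) *
            ∏ p, (if σ p then v p else 1))) := by
  have hn := hmono.injective
  have hcoeff := fun k (hk : k ≤ N) => coeff_eq_sum_tauCoeff hn hr hk
  refine ⟨fun v => ?_, fun v => ?_,
    fun k hk => ⟨tauCoeff n, fun σ _ => tauCoeff_ne_zero hn hpos σ, hcoeff k hk⟩⟩
  · rw [hcoeff 0 N.zero_le, Fintype.sum_eq_single (fun _ => false)]
    · simp [weight, tauCoeff_all_false hn]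
    · intro σ hσ
      rw [if_neg (mt (eq_false_of_weight_eq_zero hpos) hσ), zero_mul]
  · rw [hcoeff N le_rfl, Fintype.sum_eq_single (fun _ => true)]
    · simp [weight, hN, tauCoeff_all_true hn]
    · intro σ hσ
      rw [if_neg (mt (fun h => eq_true_of_weight_eq_sum hpos (h.trans hN)) hσ), zero_mul]

/-- Properties of the coefficients `r_k` of
`τ_N(n,v,u) = (-1)^{⌊g/2⌋} det T(n,v,u) / θ(n) = Σ_{k=0}^N r_k(v) u^k`:
`r_0 = 1`, `r_N = (-1)^{⌊g/2⌋} v₁⋯v_g`, each `r_k` is of degree at most one in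
each variable `v_p` and isobaric of weight `k` (weight `n_p` assigned to `v_p`),
and every monomial `v^σ` with `n·σ = k` occurs in `r_k` with nonzero
coefficient. -/
theorem tau_coefficients_properties (g : ℕ) (hg : 0 < g) (n : Fin g → ℕ)
    (hmono : StrictMono n) (hpos : ∀ p, 0 < n p)
    (N : ℕ) (hN : N = ∑ p, n p)
    (r : ℕ → (Fin g → ℂ) → ℂ)
    (hr : ∀ (v : Fin g → ℂ) (u : ℂ),
      (-1 : ℂ) ^ (g / 2) * Matrix.det (matT n v u) =
        vdm (fun p => (n p : ℂ)) * ∑ k ∈ Finset.range (N + 1), r k v * u ^ k) :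
    (∀ v : Fin g → ℂ, r 0 v = 1) ∧
    (∀ v : Fin g → ℂ, r N v = (-1 : ℂ) ^ (g / 2) * ∏ p, v p) ∧
    (∀ k : ℕ, k ≤ N → ∃ c : (Fin g → Bool) → ℂ,
      (∀ σ : Fin g → Bool, (∑ p, if σ p then n p else 0) = k → c σ ≠ 0) ∧
      (∀ v : Fin g → ℂ,
        r k v = ∑ σ : Fin g → Bool,
          (if (∑ p, if σ p then n p else 0) = k then c σ else 0) *
            ∏ p, (if σ p then v p else 1))) :=
  tau_coefficients_properties_general g n hmono hpos N hN r hr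
end

section
/- Fix n_1 < ⋯ < n_g positive integers with gcd(n_1,…,n_g) = 1, and let r_1,…,r_N be the coefficient polynomials of τ_N(n,v,u) = Σ_{k=0}^N r_k(v) u^k. Then the map Θ_n: (ℂ*)^g → ℂ^{N-1} × ℂ*, v ↦ (r_1(v),…,r_N(v)), is injective, and in fact each v_p is a polynomial function of r_1,…,r_{n_p} (so Θ_n is a homeomorphism onto its image). -/
open Finset

/-- The family of signed values `±n_p` associated to a subset `S`. -/
def avals {g : ℕ} (n : Fin g → ℕ) (S : Finset (Fin g)) : Fin g → ℂ :=
  fun p => if p ∈ S then (n p : ℂ) else -(n p : ℂ)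

/-- The coefficient functions appearing in the expansion of `det T(n,v,u)`. -/
noncomputable def Efun {g : ℕ} (n : Fin g → ℕ) (k : ℕ) (v : Fin g → ℂ) : ℂ :=
  ∑ S ∈ Finset.univ.filter (fun S : Finset (Fin g) => ∑ p ∈ S, n p = k),
    (∏ p ∈ S, v p) * vdm (avals n S)

lemma vdm_ne_zero {g : ℕ} {a : Fin g → ℂ} (ha : Function.Injective a) : vdm a ≠ 0 := by
  unfold vdm
  rw [Finset.prod_ne_zero_iff]
  intro p _
  rw [Finset.prod_ne_zero_iff]
  intro p' hp'
  exact sub_ne_zero.2 fun h => (Finset.mem_Ioi.1 hp').ne' (ha h)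

lemma avals_injective {g : ℕ} {n : Fin g → ℕ} (hmono : StrictMono n) (hpos : ∀ p, 0 < n p)
    (S : Finset (Fin g)) : Function.Injective (avals n S) := by
  intro p q h
  have hcast : ∀ x y : Fin g, ((n x : ℕ) : ℂ) = ((n y : ℕ) : ℂ) → x = y := fun x y hxy =>
    hmono.injective (Nat.cast_injective hxy)
  have himp : ∀ x y : Fin g, ((n x : ℕ) : ℂ) = -((n y : ℕ) : ℂ) → False := by
    intro x y hxy
    have h0 : ((n x + n y : ℕ) : ℂ) = 0 := by push_cast; rw [hxy]; ring
    have := Nat.cast_eq_zero.mp h0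
    have := hpos x
    omega
  by_cases hp : p ∈ S <;> by_cases hq : q ∈ S <;> simp only [avals, hp, hq, if_true,
    if_false] at h
  · exact hcast _ _ h
  · exact absurd h (fun h => himp p q h)
  · exact absurd h.symm (fun h => himp q p h)
  · exact hcast _ _ (neg_injective h)

/-- Multilinear expansion of `det T(n,v,u)` over subsets of columns. -/
lemma det_matT_expand {g : ℕ} (n : Fin g → ℕ) (v : Fin g → ℂ) (u : ℂ) :
    Matrix.det (matT n v u) =
      ∑ S : Finset (Fin g),
        (∏ p ∈ S, v p) * u ^ (∑ p ∈ S, n p) * vdm (avals n S) := by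
  classical
  set f := (Matrix.detRowAlternating (R := ℂ) (n := Fin g)).toMultilinearMap with hf
  have hdet : ∀ M : Matrix (Fin g) (Fin g) ℂ, Matrix.det M = f M := fun _ => rfl
  set A : Fin g → Fin g → ℂ :=
    fun p' => (v p' * u ^ n p') • (fun p : Fin g => ((n p' : ℂ)) ^ (p : ℕ)) with hA
  set B : Fin g → Fin g → ℂ := fun p' p => (-(n p' : ℂ)) ^ (p : ℕ) with hB
  have hAB : Matrix.transpose (matT n v u) = A + B := by
    funext p' p
    show matT n v u p p' = A p' p + B p' p
    simp only [hA, hB, matT, Pi.smul_apply, smul_eq_mul]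
    rw [neg_pow]
    ring
  rw [← Matrix.det_transpose, hdet, hAB, f.map_add_univ A B]
  refine Finset.sum_congr rfl fun S _ => ?_
  have hpw : S.piecewise A B = fun p' => (if p' ∈ S then v p' * u ^ n p' else 1) •
      (fun p : Fin g => (avals n S p') ^ (p : ℕ)) := by
    funext p'
    by_cases h : p' ∈ S
    · rw [Finset.piecewise_eq_of_mem _ _ _ h]
      simp only [hA, avals, h, if_true]
    · rw [Finset.piecewise_eq_of_notMem _ _ _ h]
      simp only [hB, avals, h, if_false, one_smul]
  rw [hpw, f.map_smul_univ]
  have hvd : f (fun p' : Fin g => fun p : Fin g => (avals n S p') ^ (p : ℕ))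
      = vdm (avals n S) := by
    have h1 : f (fun p' : Fin g => fun p : Fin g => (avals n S p') ^ (p : ℕ))
        = Matrix.det (Matrix.vandermonde (avals n S)) := (hdet _).symm
    rw [h1, Matrix.det_vandermonde]
    rfl
  rw [hvd, smul_eq_mul]
  congr 1
  rw [Finset.prod_ite_mem, Finset.univ_inter, Finset.prod_mul_distrib,
    Finset.prod_pow_eq_pow_sum]

/-- The fiber of subsets with weight `n m` consists of `{m}` together with
subsets of `Iio m`. -/
lemma fiber_eq {g : ℕ} {n : Fin g → ℕ} (hmono : StrictMono n) (hpos : ∀ p, 0 < n p)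
    (m : Fin g) :
    Finset.univ.filter (fun S : Finset (Fin g) => ∑ p ∈ S, n p = n m) =
      insert {m} ((Finset.Iio m).powerset.filter
        (fun S : Finset (Fin g) => ∑ p ∈ S, n p = n m)) := by
  classical
  ext S
  simp only [Finset.mem_filter, Finset.mem_univ, true_and, Finset.mem_insert,
    Finset.mem_powerset]
  constructor
  · intro hS
    by_cases hm : ∀ q ∈ S, q < m
    · exact Or.inr ⟨fun p hp => Finset.mem_Iio.2 (hm p hp), hS⟩
    · push_neg at hm
      obtain ⟨q, hq, hmq⟩ := hm
      have h2 : n q ≤ ∑ p ∈ S, n p := Finset.single_le_sum (fun p _ => Nat.zero_le _) hq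
      have hqm : q = m := by
        have h1 : n m ≤ n q := hmono.monotone hmq
        exact hmono.injective (by omega)
      subst hqm
      left
      have h3 : n q + ∑ p ∈ S.erase q, n p = ∑ p ∈ S, n p := Finset.add_sum_erase S n hq
      have hz : ∑ p ∈ S.erase q, n p = 0 := by omega
      have he : S.erase q = ∅ := by
        by_contra hne
        obtain ⟨x, hx⟩ := Finset.nonempty_iff_ne_empty.2 hne
        have := (Finset.sum_eq_zero_iff.1 hz) x hx
        have := hpos x
        omega
      rw [← Finset.insert_erase hq, he]
      rfl
  · rintro (rfl | ⟨_, h⟩)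
    · simp
    · exact h

/-- With `n₁ < ⋯ < n_g` positive, `gcd(n₁,…,n_g) = 1`, and
`τ_N(n,v,u) = (-1)^{⌊g/2⌋} det T(n,v,u)/θ(n) = Σ_{k=0}^N r_k(v) u^k`, the map
`Θ_n : (ℂ*)^g → ℂ^{N-1} × ℂ*`, `v ↦ (r₁(v),…,r_N(v))`, is injective; in fact
each `v_p` is a polynomial function of `r₁,…,r_{n_p}`, so `Θ_n` is a
homeomorphism onto its image. -/
theorem theta_map_injective (g : ℕ) (hg : 0 < g) (n : Fin g → ℕ)
    (hmono : StrictMono n) (hpos : ∀ p, 0 < n p)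
    (hgcd : Finset.univ.gcd n = 1)
    (N : ℕ) (hN : N = ∑ p, n p)
    (r : ℕ → (Fin g → ℂ) → ℂ)
    (hr : ∀ (v : Fin g → ℂ) (u : ℂ),
      (-1 : ℂ) ^ (g / 2) * Matrix.det (matT n v u) =
        vdm (fun p => (n p : ℂ)) * ∑ k ∈ Finset.range (N + 1), r k v * u ^ k) :
    -- Θ_n is injective on (ℂ*)^g
    (∀ v w : Fin g → ℂ, (∀ p, v p ≠ 0) → (∀ p, w p ≠ 0) →
      (∀ k : ℕ, 1 ≤ k → k ≤ N → r k v = r k w) → v = w) ∧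
    -- each v_p is a polynomial function of r₁, …, r_{n_p}
    (∀ p : Fin g, ∃ F : MvPolynomial (Fin (n p)) ℂ,
      ∀ v : Fin g → ℂ, (∀ q, v q ≠ 0) →
        v p = MvPolynomial.eval (fun i : Fin (n p) => r ((i : ℕ) + 1) v) F) ∧
    -- consequently Θ_n is a homeomorphism onto its image (an embedding)
    Topology.IsEmbedding
      (fun v : {v : Fin g → ℂ // ∀ p, v p ≠ 0} =>
        (fun k : Fin N => r ((k : ℕ) + 1) v.1)) := by
  classical
  set V : ℂ := vdm (fun p => (n p : ℂ)) with hVdef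
  have hninj : Function.Injective (fun p : Fin g => ((n p : ℕ) : ℂ)) := fun p q h =>
    hmono.injective (Nat.cast_injective h)
  have hV : V ≠ 0 := vdm_ne_zero hninj
  have hnple : ∀ p : Fin g, n p ≤ N := fun p =>
    hN ▸ Finset.single_le_sum (fun q _ => Nat.zero_le _) (Finset.mem_univ p)
  -- regrouped determinant expansion
  have hsum : ∀ (v : Fin g → ℂ) (u : ℂ), Matrix.det (matT n v u)
      = ∑ k ∈ Finset.range (N + 1), Efun n k v * u ^ k := by
    intro v u
    rw [det_matT_expand]
    have hmaps : ∀ S ∈ (Finset.univ : Finset (Finset (Fin g))),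
        (∑ p ∈ S, n p) ∈ Finset.range (N + 1) := by
      intro S _
      rw [Finset.mem_range]
      have := Finset.sum_le_sum_of_subset (f := n) (Finset.subset_univ S)
      omega
    rw [← Finset.sum_fiberwise_of_maps_to
      (g := fun S : Finset (Fin g) => ∑ p ∈ S, n p) (t := Finset.range (N + 1))
      hmaps
      (fun S => (∏ p ∈ S, v p) * u ^ (∑ p ∈ S, n p) * vdm (avals n S))]
    refine Finset.sum_congr rfl fun k _ => ?_
    rw [Efun, Finset.sum_mul]
    refine Finset.sum_congr rfl fun S hS => ?_
    have := (Finset.mem_filter.1 hS).2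
    rw [this]
    ring
  -- the coefficient identity
  have hkey : ∀ k, k ≤ N → ∀ v : Fin g → ℂ,
      V * r k v = (-1 : ℂ) ^ (g / 2) * Efun n k v := by
    intro k hk v
    have hpoly : (∑ j ∈ Finset.range (N + 1),
          Polynomial.C (V * r j v) * Polynomial.X ^ j)
        = ∑ j ∈ Finset.range (N + 1),
          Polynomial.C ((-1 : ℂ) ^ (g / 2) * Efun n j v) * Polynomial.X ^ j := by
      apply Polynomial.funext
      intro u
      have h1 := (hr v u).symm
      rw [hsum v u, Finset.mul_sum, Finset.mul_sum] at h1
      simp only [Polynomial.eval_finset_sum, Polynomial.eval_mul, Polynomial.eval_C,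
        Polynomial.eval_pow, Polynomial.eval_X]
      calc ∑ j ∈ Finset.range (N + 1), V * r j v * u ^ j
          = ∑ j ∈ Finset.range (N + 1), V * (r j v * u ^ j) := by
            refine Finset.sum_congr rfl fun j _ => by ring
        _ = ∑ j ∈ Finset.range (N + 1), (-1 : ℂ) ^ (g / 2) * (Efun n j v * u ^ j) := h1
        _ = ∑ j ∈ Finset.range (N + 1), (-1 : ℂ) ^ (g / 2) * Efun n j v * u ^ j := by
            refine Finset.sum_congr rfl fun j _ => by ring
    have h2 := congrArg (fun P : Polynomial ℂ => P.coeff k) hpoly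
    simp only [Polynomial.finset_sum_coeff, Polynomial.coeff_C_mul, Polynomial.coeff_X_pow,
      mul_ite, mul_one, mul_zero] at h2
    rw [Finset.sum_ite_eq (Finset.range (N + 1)) k,
      Finset.sum_ite_eq (Finset.range (N + 1)) k] at h2
    simpa [Finset.mem_range, Nat.lt_succ_of_le hk] using h2
  have hrE : ∀ k, k ≤ N → ∀ v : Fin g → ℂ,
      r k v = V⁻¹ * ((-1 : ℂ) ^ (g / 2) * Efun n k v) := by
    intro k hk v
    rw [← hkey k hk v, inv_mul_cancel_left₀ hV]
  have hsq : ((-1 : ℂ)) ^ (g / 2) * ((-1 : ℂ)) ^ (g / 2) = 1 := by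
    rw [← pow_add]
    exact Even.neg_one_pow ⟨g / 2, rfl⟩
  -- the inductive construction of the inverse polynomials
  set P : Fin g → Prop := fun m => ∃ F : MvPolynomial (Fin (n m)) ℂ,
      ∀ v : Fin g → ℂ, v m = MvPolynomial.eval (fun i : Fin (n m) => r ((i : ℕ) + 1) v) F
    with hPdef
  let G : ∀ m : Fin g, MvPolynomial (Fin (n m)) ℂ :=
    fun m => if h : P m then h.choose else 0
  have hGspec : ∀ m : Fin g, P m → ∀ v : Fin g → ℂ,
      v m = MvPolynomial.eval (fun i : Fin (n m) => r ((i : ℕ) + 1) v) (G m) := by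
    intro m h v
    have hG : G m = h.choose := dif_pos h
    rw [hG]
    exact h.choose_spec v
  have hPall : ∀ m : Fin g, P m := by
    have key : ∀ t : ℕ, ∀ m : Fin g, (m : ℕ) < t → P m := by
      intro t
      induction t with
      | zero => intro m hm; omega
      | succ t ih =>
        intro m _hm
        have ihm : ∀ q : Fin g, q < m → P q := fun q hq => ih q (by omega)
        set c : ℂ := vdm (avals n {m}) with hcdef
        have hc : c ≠ 0 := vdm_ne_zero (avals_injective hmono hpos {m})
        set fib : Finset (Finset (Fin g)) :=
          (Finset.Iio m).powerset.filter (fun S : Finset (Fin g) => ∑ p ∈ S, n p = n m)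
          with hfibdef
        have hlt : ∀ S ∈ fib, ∀ p ∈ S, p < m := by
          intro S hS p hp
          exact Finset.mem_Iio.1 (Finset.mem_powerset.1 (Finset.mem_filter.1 hS).1 hp)
        have hsubS : ∀ S ∈ fib, ∀ p ∈ S, n p ≤ n m :=
          fun S hS p hp => (hmono (hlt S hS p hp)).le
        have hnm0 := hpos m
        have hnm : n m - 1 + 1 = n m := by omega
        refine ⟨MvPolynomial.C c⁻¹ *
          (MvPolynomial.C ((-1 : ℂ) ^ (g / 2) * V) *
              MvPolynomial.X (⟨n m - 1, by omega⟩ : Fin (n m))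
            - ∑ S ∈ fib.attach, MvPolynomial.C (vdm (avals n S.1)) *
                ∏ p ∈ S.1.attach,
                  MvPolynomial.rename (Fin.castLE (hsubS S.1 S.2 p.1 p.2)) (G p.1)), ?_⟩
        intro v
        have hGv : ∀ (S : {x // x ∈ fib}) (p : {x // x ∈ S.1}),
            MvPolynomial.eval (fun i : Fin (n p.1) => r ((i : ℕ) + 1) v) (G p.1) = v p.1 :=
          fun S p => (hGspec p.1 (ihm p.1 (hlt S.1 S.2 p.1 p.2)) v).symm
        simp only [map_mul, map_sub, map_sum, map_prod, MvPolynomial.eval_C,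
          MvPolynomial.eval_X, MvPolynomial.eval_rename, Function.comp_def, Fin.coe_castLE]
        simp only [hGv]
        have hattach : ∑ S ∈ fib.attach, vdm (avals n S.1) * ∏ p ∈ S.1.attach, v p.1
            = ∑ S ∈ fib, vdm (avals n S) * ∏ p ∈ S, v p := by
          rw [← Finset.sum_attach fib (fun S => vdm (avals n S) * ∏ p ∈ S, v p)]
          exact Finset.sum_congr rfl fun S _ => by
            rw [Finset.prod_attach S.1 (fun p => v p)]
        rw [hattach]
        have hval : ((⟨n m - 1, by omega⟩ : Fin (n m)) : ℕ) + 1 = n m := hnm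
        rw [hval]
        have hEsplit : Efun n (n m) v
            = v m * c + ∑ S ∈ fib, (∏ p ∈ S, v p) * vdm (avals n S) := by
          rw [Efun, fiber_eq hmono hpos m, Finset.sum_insert, Finset.prod_singleton, hcdef,
            ← hfibdef]
          intro hmem
          have h1 := Finset.mem_powerset.1 (Finset.mem_filter.1 hmem).1
          have := Finset.mem_Iio.1 (h1 (Finset.mem_singleton_self m))
          exact absurd this (lt_irrefl m)
        have hrv := hrE (n m) (hnple m) v
        rw [hrv, hEsplit]
        have hTT : ∑ S ∈ fib, vdm (avals n S) * ∏ p ∈ S, v p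
            = ∑ S ∈ fib, (∏ p ∈ S, v p) * vdm (avals n S) :=
          Finset.sum_congr rfl fun S _ => mul_comm _ _
        rw [hTT]
        have hVV : ∀ X : ℂ,
            (-1 : ℂ) ^ (g / 2) * V * (V⁻¹ * ((-1 : ℂ) ^ (g / 2) * X)) = X := by
          intro X
          have h1 : V * V⁻¹ = 1 := mul_inv_cancel₀ hV
          calc (-1 : ℂ) ^ (g / 2) * V * (V⁻¹ * ((-1 : ℂ) ^ (g / 2) * X))
              = ((-1 : ℂ) ^ (g / 2) * (-1 : ℂ) ^ (g / 2)) * (V * V⁻¹) * X := by ring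
            _ = X := by rw [hsq, h1]; ring
        rw [hVV, add_sub_cancel_right, mul_comm (v m) c, inv_mul_cancel_left₀ hc]
    intro m
    exact key ((m : ℕ) + 1) m (Nat.lt_succ_self _)
  refine ⟨?_, ?_, ?_⟩
  · -- injectivity
    intro v w _ _ hvw
    funext p
    obtain ⟨F, hF⟩ := hPall p
    rw [hF v, hF w]
    have heq : (fun i : Fin (n p) => r ((i : ℕ) + 1) v)
        = (fun i : Fin (n p) => r ((i : ℕ) + 1) w) := funext fun i =>
      hvw ((i : ℕ) + 1) (Nat.le_add_left 1 i)
        (le_trans (Nat.succ_le_of_lt i.isLt) (hnple p))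
    rw [heq]
  · -- polynomial inverse
    intro p
    obtain ⟨F, hF⟩ := hPall p
    exact ⟨F, fun v _ => hF v⟩
  · -- embedding
    have hcontr : ∀ k : ℕ, k ≤ N → Continuous fun v : Fin g → ℂ => r k v := by
      intro k hk
      have heq : (fun v : Fin g → ℂ => r k v)
          = fun v => V⁻¹ * ((-1 : ℂ) ^ (g / 2) * Efun n k v) := funext fun v => hrE k hk v
      rw [heq]
      refine continuous_const.mul (continuous_const.mul ?_)
      unfold Efun
      exact continuous_finset_sum _ fun S _ =>
        (continuous_finset_prod _ fun p _ => continuous_apply p).mul continuous_const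
    have hf : Continuous (fun v : {v : Fin g → ℂ // ∀ p, v p ≠ 0} =>
        (fun k : Fin N => r ((k : ℕ) + 1) v.1)) := by
      refine continuous_pi fun k => ?_
      exact (hcontr ((k : ℕ) + 1) (Nat.succ_le_of_lt k.isLt)).comp continuous_subtype_val
    let H : (Fin N → ℂ) → (Fin g → ℂ) :=
      fun y p => MvPolynomial.eval (fun i : Fin (n p) => y (Fin.castLE (hnple p) i)) (G p)
    have hH : Continuous H := by
      refine continuous_pi fun p => ?_
      exact (MvPolynomial.continuous_eval (G p)).comp
        (continuous_pi fun i => continuous_apply _)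
    have hcomp : (H ∘ fun v : {v : Fin g → ℂ // ∀ p, v p ≠ 0} =>
        (fun k : Fin N => r ((k : ℕ) + 1) v.1)) = Subtype.val := by
      funext v
      funext p
      exact (hGspec p (hPall p) v.1).symm
    exact Topology.IsEmbedding.of_comp hf hH
      (by rw [hcomp]; exact Topology.IsEmbedding.subtypeVal)
end

section
/- Fix n_1 < ⋯ < n_g positive integers. The discriminant of τ_N(n,v,·) (as a degree-N polynomial in u), viewed as a polynomial in the variables v_1,…,v_g, is not identically zero; equivalently, there exists v ∈ (ℂ*)^g such that τ_N(n,v,·) has N simple roots. -/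
open Finset

/-!
Write the `j`-th column of `T(n,v,u)` as `v_j u^{n_j} (n_j^p)_p + ((-n_j)^p)_p` and switch the
columns on one at a time: `tauPoly n A v x` is the determinant whose `j`-th column is
`v_j X^{n_j} (n_j^p)_p + (x_j^p)_p` for `j ∈ A` and `(x_j^p)_p` otherwise, where `x_j = -n_j`
on `A` and `x_j = ±n_j` off `A`. Its value at `0` is the Vandermonde determinant of the
distinct numbers `x_j`, so it is nonzero. Switching on column `κ` gives the pencil
`w X^{n_κ} P₊ + P₋`, where `P₊` and `P₋` are the old polynomials with column `κ` frozen to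
`+n_κ` and `-n_κ`. Over `ℂ` a pencil `w A + B` with `A, B` coprime and `A` nonconstant is
separable for all but finitely many `w`, and two such pencils with nonzero cross term
`A₁ B₂ - A₂ B₁` are coprime for all but finitely many `w`. So the induction carries
separability for every frozen sign pattern together with coprimality of any two patterns that
differ in one frozen column; the cross terms needed for the latter are nonzero at `0` by an
exchange identity for Vandermonde determinants, which reduces them to `4 n_κ n_j ≠ 0`.
-/

open Polynomial Filter Function

namespace Finset

theorem prod_mul_eq_prod_mul_of_eq_off {ι M : Type*} [CommMonoid M] [DecidableEq ι]
    {s : Finset ι} {f f' : ι → M} {i : ι} {a a' : M} (hi : i ∈ s)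
    (hfi : f i * a' = f' i * a) (h : ∀ j ∈ s, j ≠ i → f j = f' j) :
    (∏ j ∈ s, f j) * a' = (∏ j ∈ s, f' j) * a := by
  rw [← mul_prod_erase s f hi, ← mul_prod_erase s f' hi,
    prod_congr rfl fun j hj => h j (mem_of_mem_erase hj) (ne_of_mem_erase hj),
    mul_right_comm, hfi, mul_right_comm]

end Finset

namespace Polynomial

section CommRing

variable {R : Type*} [CommRing R]

theorem coeff_prod_sum_of_natDegree_le {ι : Type*} (s : Finset ι) (f : ι → R[X]) (d : ι → ℕ)
    (h : ∀ i ∈ s, (f i).natDegree ≤ d i) :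
    (∏ i ∈ s, f i).coeff (∑ i ∈ s, d i) = ∏ i ∈ s, (f i).coeff (d i) := by
  classical
  induction s using Finset.induction_on with
  | empty => simp
  | insert a s ha ih =>
    have hs : ∀ i ∈ s, (f i).natDegree ≤ d i := fun i hi => h i (mem_insert_of_mem hi)
    rw [prod_insert ha, sum_insert ha, prod_insert ha,
      coeff_mul_add_eq_of_natDegree_le (h a (mem_insert_self a s))
        ((natDegree_prod_le _ _).trans (sum_le_sum hs)), ih hs]

variable {ι : Type*} [Fintype ι] [DecidableEq ι]

theorem natDegree_det_le_of_natDegree_le {M : Matrix ι ι R[X]} {d : ι → ℕ}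
    (h : ∀ i j, (M i j).natDegree ≤ d j) : M.det.natDegree ≤ ∑ j, d j := by
  rw [Matrix.det_apply]
  refine natDegree_sum_le_of_forall_le _ _ fun σ _ => (natDegree_smul_le _ _).trans ?_
  exact (natDegree_prod_le _ _).trans (sum_le_sum fun i _ => h (σ i) i)

theorem coeff_det_of_natDegree_le {M : Matrix ι ι R[X]} {d : ι → ℕ}
    (h : ∀ i j, (M i j).natDegree ≤ d j) :
    M.det.coeff (∑ j, d j) = (Matrix.of fun i j => (M i j).coeff (d j)).det := by
  simp only [Matrix.det_apply, finsetSum_coeff, coeff_smul, Matrix.of_apply]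
  exact sum_congr rfl fun σ _ => by
    rw [coeff_prod_sum_of_natDegree_le _ _ _ fun i _ => h (σ i) i]

end CommRing

variable {K : Type*} [Field K] [IsAlgClosed K]

theorem eventually_isCoprime_C_mul_add {A₁ B₁ A₂ B₂ : K[X]} (hAB : IsCoprime A₁ B₁)
    (hV : A₁ * B₂ - A₂ * B₁ ≠ 0) :
    ∀ᶠ w in cofinite, IsCoprime (C w * A₁ + B₁) (C w * A₂ + B₂) := by
  refine eventually_cofinite.2 <|
    ((finite_setOfPred_isRoot hV).image fun α => -B₁.eval α / A₁.eval α).subset fun w hw => ?_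
  obtain ⟨α, h₁, h₂⟩ : ∃ α, (C w * A₁ + B₁).eval α = 0 ∧ (C w * A₂ + B₂).eval α = 0 := by
    simpa [coe_aeval_eq_eval] using mt (isCoprime_iff_aeval_ne_zero_of_isAlgClosed K K _ _).2 hw
  simp only [eval_add, eval_mul, eval_C] at h₁ h₂
  have hA : A₁.eval α ≠ 0 := fun h => by
    have := (isCoprime_iff_aeval_ne_zero_of_isAlgClosed K K A₁ B₁).1 hAB α
    simp only [coe_aeval_eq_eval] at this
    exact this.elim (· h) (· (by simpa [h] using h₁))
  refine ⟨α, ?_, ?_⟩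
  · simp only [Set.mem_ofPred_eq, IsRoot, eval_sub, eval_mul]
    linear_combination A₁.eval α * h₂ - A₂.eval α * h₁
  · show -B₁.eval α / A₁.eval α = w
    rw [div_eq_iff hA]
    linear_combination -h₁

theorem eventually_separable_C_mul_add [CharZero K] {A B : K[X]} (hAB : IsCoprime A B)
    (hA : 0 < A.natDegree) : ∀ᶠ w in cofinite, (C w * A + B).Separable := by
  have hW : A * derivative B - derivative A * B ≠ 0 := by
    intro h
    have hdvd : A ∣ derivative A :=
      hAB.dvd_of_dvd_mul_right ⟨derivative B, (sub_eq_zero.1 h).symm⟩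
    have hA' : derivative A ≠ 0 := fun h0 =>
      hA.ne' (derivative_eq_zero.1 h0)
    exact (natDegree_le_of_dvd hdvd hA').not_gt (natDegree_derivative_lt hA.ne')
  filter_upwards [eventually_isCoprime_C_mul_add hAB hW] with w hw
  simpa [Separable, derivative_mul] using hw

theorem Separable.exists_injective_eval_eq_prod {P : K[X]} (hP : P.Separable) {N : ℕ}
    (hN : P.natDegree = N) :
    ∃ z : Fin N → K, Injective z ∧ ∀ u, P.eval u = P.leadingCoeff * ∏ i, (u - z i) := by
  classical
  have hsplit := IsAlgClosed.splits P
  have hnodup := nodup_roots hP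
  have hcard : Fintype.card P.roots.toFinset = N := by
    rw [Fintype.card_coe, Multiset.toFinset_card_of_nodup hnodup,
      ← hsplit.natDegree_eq_card_roots, hN]
  let e := Fintype.equivFinOfCardEq hcard
  refine ⟨fun i => e.symm i, Subtype.val_injective.comp e.symm.injective, fun u => ?_⟩
  conv_lhs => rw [hsplit.eq_prod_roots]
  rw [eval_mul, eval_C, eval_multiset_prod, Multiset.map_map,
    Equiv.prod_comp e.symm fun a : P.roots.toFinset => u - (a : K), prod_coe_sort,
    prod_eq_multiset_prod, Multiset.toFinset_val, Multiset.dedup_eq_self.2 hnodup]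
  simp

end Polynomial

open Matrix

section Vandermonde

variable {g : ℕ}

theorem vdm_eq_det (a : Fin g → ℂ) : vdm a = (of fun p j : Fin g => a j ^ (p : ℕ)).det := by
  rw [← det_transpose]
  exact (det_vandermonde a).symm

theorem vdm_update_update_exchange {p q : Fin g} (hpq : p ≠ q) (x : Fin g → ℂ)
    (α α' β β' : ℂ) :
    vdm (update (update x p α) q β) * vdm (update (update x p α') q β') * ((β' - α) * (β - α')) =
      vdm (update (update x p α) q β') * vdm (update (update x p α') q β) *
        ((β - α) * (β' - α')) := by
  wlog hlt : p < q generalizing p q α α' β β'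
  · have h := this hpq.symm β β' α α' (lt_of_le_of_ne (not_lt.1 hlt) hpq.symm)
    simp only [update_comm hpq.symm] at h
    linear_combination h
  set y : ℂ → ℂ → Fin g → ℂ := fun a b => update (update x p a) q b
  -- Only the factor of the pair `(p, q)` sees both updated coordinates.
  have hfactor : ∀ r s : Fin g, r < s → (r, s) ≠ (p, q) →
      (y α β s - y α β r) * (y α' β' s - y α' β' r) =
        (y α β' s - y α β' r) * (y α' β s - y α' β r) := by
    intro r s hrs hne
    simp only [y, update_apply]
    split_ifs <;> subst_vars <;> first | exact absurd rfl hne | exact absurd hrs hlt.not_gt | ring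
  have hvdm : ∀ a b : Fin g → ℂ,
      vdm a * vdm b = ∏ r, ∏ s ∈ Ioi r, (a s - a r) * (b s - b r) := fun a b => by
    simp only [vdm, ← prod_mul_distrib]
  have key := prod_mul_eq_prod_mul_of_eq_off (mem_univ p)
    (prod_mul_eq_prod_mul_of_eq_off (mem_Ioi.2 hlt) (mul_comm _ _)
      fun s hs hsq => hfactor p s (mem_Ioi.1 hs) fun h => hsq (Prod.ext_iff.1 h).2)
    fun r _ hrp => prod_congr rfl fun s hs =>
      hfactor r s (mem_Ioi.1 hs) fun h => hrp (Prod.ext_iff.1 h).1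
  rw [← hvdm, ← hvdm] at key
  simpa [y, update_of_ne hpq] using key

theorem vdm_flip_mul_vdm_flip_ne {p q : Fin g} (hpq : p ≠ q) {x : Fin g → ℂ} (hp : x p ≠ 0)
    (hq : x q ≠ 0) (h : vdm (update (update x p (-x p)) q (-x q)) * vdm x ≠ 0) :
    vdm (update x p (-x p)) * vdm (update x q (-x q)) ≠
      vdm (update (update x p (-x p)) q (-x q)) * vdm x := by
  intro hTU
  have hexch := vdm_update_update_exchange hpq x (-x p) (x p) (x q) (-x q)
  rw [update_eq_self_iff.2 (update_of_ne hpq.symm _ _).symm, update_eq_self,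
    update_eq_self] at hexch
  refine mul_ne_zero h (by simp [hp, hq]) (?_ : _ * (4 * x p * x q) = 0)
  linear_combination hexch - ((-x q - -x p) * (x q - x p)) * hTU

end Vandermonde

section SignVectors

variable {g : ℕ} (n : Fin g → ℕ)

def signVectors : Set (Fin g → ℂ) := Set.univ.pi fun j => {(n j : ℂ), -(n j : ℂ)}

theorem finite_signVectors : (signVectors n).Finite :=
  Set.Finite.pi fun _ => Set.toFinite _

variable {n}

theorem mem_signVectors {x : Fin g → ℂ} : x ∈ signVectors n ↔ ∀ j, x j = n j ∨ x j = -n j := by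
  simp [signVectors]

theorem update_neg_mem_signVectors {x : Fin g → ℂ} (hx : x ∈ signVectors n) (j : Fin g) :
    update x j (-x j) ∈ signVectors n := by
  rw [mem_signVectors] at hx ⊢
  intro i
  rcases eq_or_ne i j with rfl | hij
  · rcases hx i with h | h <;> simp [h]
  · simpa [hij] using hx i

theorem ne_zero_of_mem_signVectors (hpos : ∀ j, 0 < n j) {x : Fin g → ℂ}
    (hx : x ∈ signVectors n) (j : Fin g) : x j ≠ 0 := by
  rcases mem_signVectors.1 hx j with h | h <;> simp [h, (hpos j).ne']

theorem vdm_ne_zero_of_mem_signVectors (hn : Injective n) {x : Fin g → ℂ}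
    (hx : x ∈ signVectors n) : vdm x ≠ 0 := by
  have hsq : ∀ j, x j ^ 2 = (n j : ℂ) ^ 2 := fun j => by
    rcases mem_signVectors.1 hx j with h | h <;> simp [h]
  rw [vdm, ← det_vandermonde, det_vandermonde_ne_zero_iff]
  intro p q hpq
  have h : (n p : ℂ) ^ 2 = (n q : ℂ) ^ 2 := by rw [← hsq, ← hsq, hpq]
  exact hn (Nat.pow_left_injective two_ne_zero (by exact_mod_cast h))

end SignVectors

section TauPolynomial

variable {g : ℕ} (n : Fin g → ℕ)

noncomputable def mixedVandermonde (a : Fin g → ℂ[X]) (x : Fin g → ℂ) :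
    Matrix (Fin g) (Fin g) ℂ[X] :=
  of fun p j => a j * C ((n j : ℂ) ^ (p : ℕ)) + C (x j ^ (p : ℕ))

theorem eval_det_mixedVandermonde (a : Fin g → ℂ[X]) (x : Fin g → ℂ) (u : ℂ) :
    (mixedVandermonde n a x).det.eval u =
      (of fun p j : Fin g => (a j).eval u * (n j : ℂ) ^ (p : ℕ) + x j ^ (p : ℕ)).det := by
  rw [← coe_evalRingHom, RingHom.map_det]
  congr 1
  ext p j
  simp [mixedVandermonde]

theorem det_mixedVandermonde_update {a : Fin g → ℂ[X]} {κ : Fin g} (ha : a κ = 0) (c : ℂ[X])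
    (x : Fin g → ℂ) :
    (mixedVandermonde n (update a κ c) x).det =
      c * (mixedVandermonde n a (update x κ (n κ))).det + (mixedVandermonde n a x).det := by
  set M := mixedVandermonde n a x
  have hM : mixedVandermonde n (update a κ c) x = M.updateCol κ
      ((c • fun p : Fin g => C ((n κ : ℂ) ^ (p : ℕ))) + fun p : Fin g => C (x κ ^ (p : ℕ))) := by
    ext p j
    rcases eq_or_ne j κ with rfl | hj <;> simp [M, mixedVandermonde, *]
  have hn : M.updateCol κ (fun p => C ((n κ : ℂ) ^ (p : ℕ))) =
      mixedVandermonde n a (update x κ (n κ)) := by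
    ext p j
    rcases eq_or_ne j κ with rfl | hj <;> simp [M, mixedVandermonde, *]
  have hx : M.updateCol κ (fun p => C (x κ ^ (p : ℕ))) = M := by
    ext p j
    rcases eq_or_ne j κ with rfl | hj <;> simp [M, mixedVandermonde, *]
  rw [hM, det_updateCol_add, det_updateCol_smul, hn, hx]

noncomputable def activeCoeffs (A : Finset (Fin g)) (v : Fin g → ℂ) (j : Fin g) : ℂ[X] :=
  if j ∈ A then C (v j) * X ^ n j else 0

noncomputable def tauPoly (A : Finset (Fin g)) (v x : Fin g → ℂ) : ℂ[X] :=
  (mixedVandermonde n (activeCoeffs n A v) x).det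

variable {n}

theorem tauPoly_empty (v x : Fin g → ℂ) : tauPoly n ∅ v x = C (vdm x) := by
  rw [tauPoly, vdm_eq_det, RingHom.map_det]
  congr 1
  ext p j
  simp [mixedVandermonde, activeCoeffs]

theorem eval_zero_tauPoly (hpos : ∀ j, 0 < n j) (A : Finset (Fin g)) (v x : Fin g → ℂ) :
    (tauPoly n A v x).eval 0 = vdm x := by
  rw [tauPoly, eval_det_mixedVandermonde, vdm_eq_det]
  congr 1
  ext p j
  by_cases hj : j ∈ A <;> simp [activeCoeffs, hj, (hpos j).ne']

theorem tauPoly_insert {A : Finset (Fin g)} {κ : Fin g} (hκ : κ ∉ A) {x : Fin g → ℂ}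
    (hx : x κ = -n κ) (v : Fin g → ℂ) (w : ℂ) :
    tauPoly n (insert κ A) (update v κ w) x =
      C w * (X ^ n κ * tauPoly n A v (update x κ (-x κ))) + tauPoly n A v x := by
  have ha : activeCoeffs n (insert κ A) (update v κ w) =
      update (activeCoeffs n A v) κ (C w * X ^ n κ) := by
    funext j
    rcases eq_or_ne j κ with rfl | hj <;> simp [activeCoeffs, *]
  rw [tauPoly, ha, det_mixedVandermonde_update n (by simp [activeCoeffs, hκ]), hx, neg_neg,
    mul_assoc, tauPoly, tauPoly]

theorem det_matT_eq_eval_tauPoly (v : Fin g → ℂ) (u : ℂ) :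
    (matT n v u).det = (tauPoly n univ v fun j => -(n j : ℂ)).eval u := by
  rw [tauPoly, eval_det_mixedVandermonde]
  congr 1
  ext p j
  simp only [matT, activeCoeffs, mem_univ, if_true, eval_mul, eval_C, eval_pow, eval_X, of_apply]
  rw [neg_pow, pow_succ]
  ring

theorem natDegree_mixedVandermonde_activeCoeffs_le (A : Finset (Fin g)) (v x : Fin g → ℂ)
    (p j : Fin g) : (mixedVandermonde n (activeCoeffs n A v) x p j).natDegree ≤ n j := by
  simp only [mixedVandermonde, activeCoeffs, of_apply]
  split_ifs
  · compute_degree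
  · simp

theorem coeff_tauPoly_univ (hpos : ∀ j, 0 < n j) (v x : Fin g → ℂ) :
    (tauPoly n univ v x).coeff (∑ j, n j) = (∏ j, v j) * vdm fun j => (n j : ℂ) := by
  rw [tauPoly, coeff_det_of_natDegree_le (natDegree_mixedVandermonde_activeCoeffs_le univ v x),
    vdm_eq_det, ← det_mul_row]
  congr 1
  ext p j
  simp only [mixedVandermonde, activeCoeffs, of_apply, mem_univ, if_true]
  rw [mul_right_comm, ← C_mul, coeff_add, coeff_C_mul_X_pow, coeff_C, if_pos rfl,
    if_neg (hpos j).ne', add_zero]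

theorem natDegree_tauPoly_univ (hn : Injective n) (hpos : ∀ j, 0 < n j) {v : Fin g → ℂ}
    (hv : ∀ j, v j ≠ 0) (x : Fin g → ℂ) : (tauPoly n univ v x).natDegree = ∑ j, n j := by
  refine (natDegree_det_le_of_natDegree_le
    (natDegree_mixedVandermonde_activeCoeffs_le univ v x)).antisymm (le_natDegree_of_ne_zero ?_)
  change (tauPoly n univ v x).coeff _ ≠ 0
  rw [coeff_tauPoly_univ hpos]
  exact mul_ne_zero (prod_ne_zero_iff.2 fun j _ => hv j)
    (vdm_ne_zero_of_mem_signVectors hn (mem_signVectors.2 fun j => Or.inl rfl))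

theorem leadingCoeff_tauPoly_univ (hn : Injective n) (hpos : ∀ j, 0 < n j) {v : Fin g → ℂ}
    (hv : ∀ j, v j ≠ 0) (x : Fin g → ℂ) :
    (tauPoly n univ v x).leadingCoeff = (∏ j, v j) * vdm fun j => (n j : ℂ) := by
  rw [leadingCoeff, natDegree_tauPoly_univ hn hpos hv, coeff_tauPoly_univ hpos]

end TauPolynomial

section Induction

variable {g : ℕ} (n : Fin g → ℕ)

def IsGeneric (A : Finset (Fin g)) (v : Fin g → ℂ) : Prop :=
  ∀ x ∈ signVectors n, (∀ j ∈ A, x j = -n j) →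
    (tauPoly n A v x).Separable ∧
      ∀ j ∉ A, IsCoprime (tauPoly n A v x) (tauPoly n A v (update x j (-x j)))

variable {n}

theorem isGeneric_empty (hn : Injective n) (v : Fin g → ℂ) : IsGeneric n ∅ v := by
  intro x hx _
  have hunit : IsUnit (vdm x) := (vdm_ne_zero_of_mem_signVectors hn hx).isUnit
  rw [tauPoly_empty]
  exact ⟨(separable_C _).2 hunit, fun j _ =>
    (isCoprime_zero_right.2 (isUnit_C.2 hunit)).of_isCoprime_of_dvd_right (dvd_zero _)⟩

theorem tauPoly_ne_zero (hn : Injective n) (hpos : ∀ j, 0 < n j) (A : Finset (Fin g))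
    (v : Fin g → ℂ) {x : Fin g → ℂ} (hx : x ∈ signVectors n) : tauPoly n A v x ≠ 0 :=
  fun h => vdm_ne_zero_of_mem_signVectors hn hx <| by
    rw [← eval_zero_tauPoly hpos A v, h, eval_zero]

theorem IsGeneric.isCoprime_X_pow_mul (hn : Injective n) (hpos : ∀ j, 0 < n j)
    {A : Finset (Fin g)} {v : Fin g → ℂ} (hv : IsGeneric n A v) {κ : Fin g} (hκ : κ ∉ A)
    {x : Fin g → ℂ} (hx : x ∈ signVectors n) (hxA : ∀ j ∈ A, x j = -n j) :
    IsCoprime (X ^ n κ * tauPoly n A v (update x κ (-x κ))) (tauPoly n A v x) := by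
  refine IsCoprime.mul_left (IsCoprime.pow_left ?_) ((hv x hx hxA).2 κ hκ).symm
  rw [irreducible_X.coprime_iff_not_dvd, X_dvd_iff, coeff_zero_eq_eval_zero,
    eval_zero_tauPoly hpos]
  exact vdm_ne_zero_of_mem_signVectors hn hx

theorem tauPoly_cross_ne_zero (hn : Injective n) (hpos : ∀ j, 0 < n j) (A : Finset (Fin g))
    (v : Fin g → ℂ) {x : Fin g → ℂ} (hx : x ∈ signVectors n) {κ j : Fin g} (hκj : κ ≠ j) :
    tauPoly n A v (update x κ (-x κ)) * tauPoly n A v (update x j (-x j)) -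
      tauPoly n A v (update (update x κ (-x κ)) j (-x j)) * tauPoly n A v x ≠ 0 := by
  have hboth := update_neg_mem_signVectors (update_neg_mem_signVectors hx κ) j
  rw [update_of_ne hκj.symm] at hboth
  intro h
  have h0 := congrArg (Polynomial.eval 0) h
  simp only [eval_sub, eval_mul, eval_zero_tauPoly hpos, eval_zero] at h0
  exact vdm_flip_mul_vdm_flip_ne hκj (ne_zero_of_mem_signVectors hpos hx κ)
    (ne_zero_of_mem_signVectors hpos hx j)
    (mul_ne_zero (vdm_ne_zero_of_mem_signVectors hn hboth) (vdm_ne_zero_of_mem_signVectors hn hx))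
    (sub_eq_zero.1 h0)

theorem IsGeneric.eventually_insert (hn : Injective n) (hpos : ∀ j, 0 < n j)
    {A : Finset (Fin g)} {v : Fin g → ℂ} (hv : IsGeneric n A v) {κ : Fin g} (hκ : κ ∉ A) :
    ∀ᶠ w in cofinite, IsGeneric n (insert κ A) (update v κ w) := by
  refine (eventually_all_finite (finite_signVectors n)).2 fun x hx =>
    eventually_imp_distrib_left.2 fun hxA => ?_
  have hxκ : x κ = -n κ := hxA κ (mem_insert_self κ A)
  have hcop := hv.isCoprime_X_pow_mul hn hpos hκ hx fun j hj => hxA j (mem_insert_of_mem hj)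
  simp only [tauPoly_insert hκ hxκ]
  refine (eventually_separable_C_mul_add hcop ?_).and
    (eventually_all.2 fun j => eventually_imp_distrib_left.2 fun hj => ?_)
  · rw [natDegree_mul (pow_ne_zero _ X_ne_zero)
      (tauPoly_ne_zero hn hpos A v (update_neg_mem_signVectors hx κ)), natDegree_X_pow]
    exact Nat.lt_add_right _ (hpos κ)
  · rw [mem_insert, not_or] at hj
    have hjκ : update x j (-x j) κ = -n κ := by rw [update_of_ne (Ne.symm hj.1), hxκ]
    simp only [tauPoly_insert hκ hjκ, update_of_ne (Ne.symm hj.1), update_comm hj.1]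
    exact eventually_isCoprime_C_mul_add hcop <| ne_of_eq_of_ne (by ring) <|
      mul_ne_zero (pow_ne_zero (n κ) X_ne_zero)
        (tauPoly_cross_ne_zero hn hpos A v hx (Ne.symm hj.1))

theorem exists_isGeneric (hn : Injective n) (hpos : ∀ j, 0 < n j) (A : Finset (Fin g)) :
    ∃ v : Fin g → ℂ, (∀ j ∈ A, v j ≠ 0) ∧ IsGeneric n A v := by
  induction A using Finset.induction_on with
  | empty => exact ⟨0, by simp, isGeneric_empty hn 0⟩
  | insert κ A hκ ih =>
    obtain ⟨v, hv0, hv⟩ := ih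
    obtain ⟨w, hw0, hw⟩ :=
      ((eventually_cofinite_ne 0).and (hv.eventually_insert hn hpos hκ)).exists
    refine ⟨update v κ w, fun j hj => ?_, hw⟩
    rcases eq_or_ne j κ with rfl | hjκ
    · simpa using hw0
    · rw [update_of_ne hjκ]
      exact hv0 j ((mem_insert.1 hj).resolve_left hjκ)

end Induction

theorem tau_discriminant_not_identically_zero_general (g : ℕ)
    (n : Fin g → ℕ) (hmono : StrictMono n) (hpos : ∀ p, 0 < n p)
    (N : ℕ) (hN : N = ∑ p, n p) :
    ∃ v : Fin g → ℂ, (∀ p, v p ≠ 0) ∧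
      ∃ z : Fin N → ℂ, Function.Injective z ∧
        ∀ u : ℂ, Matrix.det (matT n v u) =
          vdm (fun p => (n p : ℂ)) * (∏ p, v p) * ∏ i, (u - z i) := by
  obtain ⟨v, hv0, hv⟩ := exists_isGeneric hmono.injective hpos univ
  have hv0' : ∀ j, v j ≠ 0 := fun j => hv0 j (mem_univ j)
  have hsep := (hv _ (mem_signVectors.2 fun j => Or.inr rfl) fun _ _ => rfl).1
  obtain ⟨z, hz, heval⟩ := hsep.exists_injective_eval_eq_prod
    ((natDegree_tauPoly_univ hmono.injective hpos hv0' _).trans hN.symm)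
  refine ⟨v, hv0', z, hz, fun u => ?_⟩
  rw [det_matT_eq_eval_tauPoly, heval, leadingCoeff_tauPoly_univ hmono.injective hpos hv0']
  ring

/-- The discriminant of `τ_N(n,v,·)` is not identically zero as a polynomial in
`v₁,…,v_g`: there exists `v ∈ (ℂ*)^g` such that the degree-`N` polynomial
`τ_N(n,v,·) = (-1)^{⌊g/2⌋} det T(n,v,·)/θ(n)` has `N` simple roots, i.e.
`det T(n,v,u) = θ(n) (∏_p v_p) ∏_{i=1}^N (u - z_i)` for `N` pairwise distinct
`z_i`. -/
theorem tau_discriminant_not_identically_zero (g : ℕ) (hg : 0 < g)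
    (n : Fin g → ℕ) (hmono : StrictMono n) (hpos : ∀ p, 0 < n p)
    (N : ℕ) (hN : N = ∑ p, n p) :
    ∃ v : Fin g → ℂ, (∀ p, v p ≠ 0) ∧
      ∃ z : Fin N → ℂ, Function.Injective z ∧
        ∀ u : ℂ, Matrix.det (matT n v u) =
          vdm (fun p => (n p : ℂ)) * (∏ p, v p) * ∏ i, (u - z i) :=
  tau_discriminant_not_identically_zero_general g n hmono hpos N hN
end

section
/- Define q(z,t) = q_0 - 6z(z³ + 6t)/(z³ - 3t)² for t ∈ ℂ. Then q(z,t) = q_0 + 2 ∂_z² ln(z³ - 3t) = q_0 - 2 Σ_{j=1}^{3} (z - (3t)^{1/3} ε_j)^{-2}, where ε_j = exp(2πij/3), and q satisfies the first time-dependent KdV equation q_t - (1/4) q_{zzz} - (3/2) q q_z + (3/2) q_0 q_z = 0. -/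
/-!
The logarithmic derivative of `z³ - 3t = ∏ⱼ (z - w εʲ)` is `∑ⱼ (z - w εʲ)⁻¹`; differentiating once
more turns `q₀ + 2 ∂_z² log (z³ - 3t)` into the partial-fraction form. The KdV equation is a direct
computation: `q_z`, `q_zz`, `q_zzz` and `q_t` are rational functions whose denominators are powers
of `z³ - 3t`.
-/

open Complex Finset Filter Topology
open scoped Real

section Calculus

variable {𝕜 : Type*} [NontriviallyNormedField 𝕜]

theorem logDeriv_sub_const (a x : 𝕜) : logDeriv (fun w => w - a) x = (x - a)⁻¹ := by
  simp [logDeriv_apply]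

theorem deriv_logDeriv_prod_sub {ι : Type*} (s : Finset ι) (a : ι → 𝕜) {z : 𝕜}
    (hz : ∀ i ∈ s, z - a i ≠ 0) :
    deriv (logDeriv fun w => ∏ i ∈ s, (w - a i)) z = -∑ i ∈ s, ((z - a i) ^ 2)⁻¹ := by
  have hnear : ∀ᶠ w in 𝓝 z, ∀ i ∈ s, w - a i ≠ 0 :=
    (eventually_all_finset s).2 fun i hi =>
      ((continuous_id.sub continuous_const).continuousAt).eventually_ne (hz i hi)
  have hlog : (logDeriv fun w => ∏ i ∈ s, (w - a i)) =ᶠ[𝓝 z] fun w => ∑ i ∈ s, (w - a i)⁻¹ := by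
    filter_upwards [hnear] with w hw
    rw [logDeriv_prod hw fun i _ => by fun_prop]
    exact sum_congr rfl fun i _ => logDeriv_sub_const (a i) w
  have hsum : HasDerivAt (fun w => ∑ i ∈ s, (w - a i)⁻¹) (∑ i ∈ s, -1 / (z - a i) ^ 2) z :=
    HasDerivAt.fun_sum fun i hi => ((hasDerivAt_id z).sub_const (a i)).fun_inv (hz i hi)
  rw [hlog.deriv_eq, hsum.deriv, ← sum_neg_distrib]
  exact sum_congr rfl fun i _ => by rw [neg_div, one_div]

theorem Set.EqOn.deriv_of_hasDerivAt {F : Type*} [NormedAddCommGroup F] [NormedSpace 𝕜 F]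
    {f g g' : 𝕜 → F} {s : Set 𝕜} (h : s.EqOn (_root_.deriv f) g) (hs : IsOpen s)
    (hg : ∀ x ∈ s, HasDerivAt g (g' x) x) : s.EqOn (_root_.deriv (_root_.deriv f)) g' :=
  fun x hx => (h.deriv hs hx).trans (hg x hx).deriv

theorem hasDerivAt_cube_sub (c x : 𝕜) : HasDerivAt (fun w => w ^ 3 - c) (3 * x ^ 2) x := by
  simpa using (hasDerivAt_pow 3 x).sub_const c

end Calculus

theorem IsPrimitiveRoot.pow_sub_eq_prod_sub_mul_pow_succ {K : Type*} [Field K] {n : ℕ} {ζ : K}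
    (hζ : IsPrimitiveRoot ζ n) (hn : 0 < n) {α c : K} (hα : α ^ n = c) (z : K) :
    z ^ n - c = ∏ i ∈ range n, (z - α * ζ ^ (i + 1)) := by
  have h := congrArg (Polynomial.eval z) (X_pow_sub_C_eq_prod hζ hn hα)
  simp only [Polynomial.eval_sub, Polynomial.eval_pow, Polynomial.eval_X, Polynomial.eval_C,
    Polynomial.eval_prod] at h
  obtain ⟨m, rfl⟩ : ∃ m, n = m + 1 := ⟨n - 1, by omega⟩
  rw [h, prod_range_succ', prod_range_succ, hζ.pow_eq_one, pow_zero]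
  simp only [mul_comm]

theorem exp_two_pi_mul_I_mul_div_eq_pow (k n : ℕ) :
    exp (2 * π * I * k / n) = exp (2 * π * I / n) ^ k := by
  rw [← exp_nat_mul]
  ring_nf

noncomputable def genusTwoKdV (q₀ z t : ℂ) : ℂ :=
  q₀ - 6 * z * (z ^ 3 + 6 * t) / (z ^ 3 - 3 * t) ^ 2

section KdV

variable {q₀ t x : ℂ}

theorem hasDerivAt_genusTwoKdV_z (hx : x ^ 3 ≠ 3 * t) :
    HasDerivAt (genusTwoKdV q₀ · t)
      (12 * (x ^ 6 + 21 * t * x ^ 3 + 9 * t ^ 2) / (x ^ 3 - 3 * t) ^ 3) x := by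
  have hx' := sub_ne_zero.2 hx
  have hN : HasDerivAt (fun w : ℂ => 6 * w * (w ^ 3 + 6 * t))
      (6 * (x ^ 3 + 6 * t) + 6 * x * (3 * x ^ 2)) x := by
    simpa using ((hasDerivAt_id x).const_mul 6).fun_mul ((hasDerivAt_pow 3 x).add_const (6 * t))
  refine ((hN.fun_div ((hasDerivAt_cube_sub (3 * t) x).fun_pow 2)
    (pow_ne_zero 2 hx')).const_sub q₀).congr_deriv ?_
  simp only [Nat.cast_ofNat, Nat.reduceSub]
  field_simp
  ring

theorem hasDerivAt_genusTwoKdV_zz (hx : x ^ 3 ≠ 3 * t) :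
    HasDerivAt (fun w => 12 * (w ^ 6 + 21 * t * w ^ 3 + 9 * t ^ 2) / (w ^ 3 - 3 * t) ^ 3)
      (-36 * (x ^ 8 + 48 * t * x ^ 5 + 90 * t ^ 2 * x ^ 2) / (x ^ 3 - 3 * t) ^ 4) x := by
  have hx' := sub_ne_zero.2 hx
  have hN : HasDerivAt (fun w : ℂ => 12 * (w ^ 6 + 21 * t * w ^ 3 + 9 * t ^ 2))
      (12 * (6 * x ^ 5 + 21 * t * (3 * x ^ 2))) x := by
    simpa using (((hasDerivAt_pow 6 x).add ((hasDerivAt_pow 3 x).const_mul (21 * t))).add_const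
      (9 * t ^ 2)).const_mul 12
  refine (hN.fun_div ((hasDerivAt_cube_sub (3 * t) x).fun_pow 3)
    (pow_ne_zero 3 hx')).congr_deriv ?_
  simp only [Nat.cast_ofNat, Nat.reduceSub]
  field_simp
  ring

theorem hasDerivAt_genusTwoKdV_zzz (hx : x ^ 3 ≠ 3 * t) :
    HasDerivAt
      (fun w => -36 * (w ^ 8 + 48 * t * w ^ 5 + 90 * t ^ 2 * w ^ 2) / (w ^ 3 - 3 * t) ^ 4)
      (144 * (x ^ 10 + 90 * t * x ^ 7 + 405 * t ^ 2 * x ^ 4 + 135 * t ^ 3 * x) /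
        (x ^ 3 - 3 * t) ^ 5) x := by
  have hx' := sub_ne_zero.2 hx
  have hN : HasDerivAt (fun w : ℂ => -36 * (w ^ 8 + 48 * t * w ^ 5 + 90 * t ^ 2 * w ^ 2))
      (-36 * (8 * x ^ 7 + 48 * t * (5 * x ^ 4) + 90 * t ^ 2 * (2 * x))) x := by
    simpa using (((hasDerivAt_pow 8 x).add ((hasDerivAt_pow 5 x).const_mul (48 * t))).add
      ((hasDerivAt_pow 2 x).const_mul (90 * t ^ 2))).const_mul (-36)
  refine (hN.fun_div ((hasDerivAt_cube_sub (3 * t) x).fun_pow 4)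
    (pow_ne_zero 4 hx')).congr_deriv ?_
  simp only [Nat.cast_ofNat, Nat.reduceSub]
  field_simp
  ring

theorem hasDerivAt_genusTwoKdV_t (hx : x ^ 3 ≠ 3 * t) :
    HasDerivAt (genusTwoKdV q₀ x) (-36 * x * (2 * x ^ 3 + 3 * t) / (x ^ 3 - 3 * t) ^ 3) t := by
  have hx' := sub_ne_zero.2 hx
  have hN : HasDerivAt (fun s : ℂ => 6 * x * (x ^ 3 + 6 * s)) (6 * x * 6) t := by
    simpa using (((hasDerivAt_id t).const_mul 6).const_add (x ^ 3)).const_mul (6 * x)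
  have hD : HasDerivAt (fun s : ℂ => x ^ 3 - 3 * s) (-3) t := by
    simpa using ((hasDerivAt_id t).const_mul 3).const_sub (x ^ 3)
  refine ((hN.fun_div (hD.fun_pow 2) (pow_ne_zero 2 hx')).const_sub q₀).congr_deriv ?_
  simp only [Nat.cast_ofNat, Nat.reduceSub]
  field_simp
  ring

theorem deriv_genusTwoKdV_zzz (hx : x ^ 3 ≠ 3 * t) :
    deriv (fun w => deriv (fun w' => deriv (genusTwoKdV q₀ · t) w') w) x =
      144 * (x ^ 10 + 90 * t * x ^ 7 + 405 * t ^ 2 * x ^ 4 + 135 * t ^ 3 * x) /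
        (x ^ 3 - 3 * t) ^ 5 := by
  have hU : IsOpen {x : ℂ | x ^ 3 ≠ 3 * t} := isOpen_ne_fun (by fun_prop) (by fun_prop)
  have h1 : Set.EqOn (deriv (genusTwoKdV q₀ · t)) _ {x : ℂ | x ^ 3 ≠ 3 * t} :=
    fun x hx => (hasDerivAt_genusTwoKdV_z hx).deriv
  have h2 := h1.deriv_of_hasDerivAt hU fun x hx => hasDerivAt_genusTwoKdV_zz hx
  exact h2.deriv_of_hasDerivAt hU (fun x hx => hasDerivAt_genusTwoKdV_zzz hx) hx

theorem genusTwoKdV_kdv (hx : x ^ 3 ≠ 3 * t) :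
    deriv (genusTwoKdV q₀ x) t
      - (1 / 4) * deriv (fun w => deriv (fun w' => deriv (genusTwoKdV q₀ · t) w') w) x
      - (3 / 2) * genusTwoKdV q₀ x t * deriv (genusTwoKdV q₀ · t) x
      + (3 / 2) * q₀ * deriv (genusTwoKdV q₀ · t) x = 0 := by
  rw [deriv_genusTwoKdV_zzz hx, (hasDerivAt_genusTwoKdV_t hx).deriv,
    (hasDerivAt_genusTwoKdV_z hx).deriv, genusTwoKdV]
  field_simp
  ring

theorem genusTwoKdV_eq_add_two_deriv (hx : x ^ 3 ≠ 3 * t) :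
    genusTwoKdV q₀ x t = q₀ + 2 * deriv (fun w => 3 * w ^ 2 / (w ^ 3 - 3 * t)) x := by
  have hx' := sub_ne_zero.2 hx
  have hN : HasDerivAt (fun w : ℂ => 3 * w ^ 2) (3 * (2 * x)) x := by
    simpa using (hasDerivAt_pow 2 x).const_mul 3
  rw [(hN.fun_div (hasDerivAt_cube_sub (3 * t) x) hx').deriv, genusTwoKdV]
  field_simp
  ring

theorem genusTwoKdV_eq_sub_sum_roots {w : ℂ} (hw : w ^ 3 = 3 * t) (hx : x ^ 3 ≠ 3 * t) :
    genusTwoKdV q₀ x t = q₀ - 2 * ∑ j ∈ range 3,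
      ((x - w * exp (2 * π * I * ((j : ℕ) + 1) / 3)) ^ 2)⁻¹ := by
  have hroot (j : ℕ) :
      exp (2 * π * I * ((j : ℕ) + 1) / 3) = exp (2 * π * I / (3 : ℕ)) ^ (j + 1) := by
    rw [← exp_two_pi_mul_I_mul_div_eq_pow]
    push_cast
    rfl
  simp_rw [hroot]
  have hfac : (fun z => z ^ 3 - 3 * t) =
      fun z => ∏ j ∈ range 3, (z - w * exp (2 * π * I / (3 : ℕ)) ^ (j + 1)) :=
    funext ((isPrimitiveRoot_exp 3 three_ne_zero).pow_sub_eq_prod_sub_mul_pow_succ three_pos hw)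
  have hlog : (fun z => 3 * z ^ 2 / (z ^ 3 - 3 * t)) = logDeriv fun z => z ^ 3 - 3 * t := by
    ext z
    simp [logDeriv_apply]
  have hne : ∀ j ∈ range 3, x - w * exp (2 * π * I / (3 : ℕ)) ^ (j + 1) ≠ 0 :=
    prod_ne_zero_iff.1 (congrFun hfac x ▸ sub_ne_zero.2 hx)
  rw [genusTwoKdV_eq_add_two_deriv hx, hlog, hfac, deriv_logDeriv_prod_sub _ _ hne]
  ring

end KdV

/-- The genus-two rational KdV solution `q(z,t) = q₀ - 6z(z³+6t)/(z³-3t)²`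
equals `q₀ + 2 ∂_z² ln(z³ - 3t)` (expressed via the derivative of the
logarithmic derivative) and `q₀ - 2 Σ_{j=1}^{3} (z - (3t)^{1/3} ε_j)⁻²` with
`ε_j = exp(2πij/3)`, and it satisfies the first time-dependent KdV equation
`q_t - (1/4) q_{zzz} - (3/2) q q_z + (3/2) q₀ q_z = 0`. -/
theorem rational_kdv_genus_two (q₀ : ℂ) (q : ℂ → ℂ → ℂ)
    (hq : ∀ z t : ℂ, q z t = q₀ - 6 * z * (z ^ 3 + 6 * t) / (z ^ 3 - 3 * t) ^ 2) :
    -- q = q₀ + 2 ∂_z² ln(z³ - 3t), i.e. q = q₀ + 2 ∂_z ((z³-3t)'/(z³-3t))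
    (∀ t z : ℂ, z ^ 3 ≠ 3 * t →
      q z t = q₀ + 2 * deriv (fun w : ℂ => (3 * w ^ 2) / (w ^ 3 - 3 * t)) z) ∧
    -- partial fraction form over the cube roots of 3t
    (∀ t : ℂ, t ≠ 0 → ∀ w : ℂ, w ^ 3 = 3 * t → ∀ z : ℂ, z ^ 3 ≠ 3 * t →
      q z t = q₀ - 2 * ∑ j ∈ Finset.range 3,
        ((z - w * Complex.exp (2 * Real.pi * Complex.I * ((j : ℕ) + 1) / 3)) ^ 2)⁻¹) ∧
    -- the first time-dependent KdV equation
    (∀ t z : ℂ, z ^ 3 ≠ 3 * t →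
      deriv (fun s => q z s) t
        - (1 / 4) * deriv (fun w => deriv (fun w' => deriv (fun w'' => q w'' t) w') w) z
        - (3 / 2) * q z t * deriv (fun w => q w t) z
        + (3 / 2) * q₀ * deriv (fun w => q w t) z = 0) := by
  obtain rfl : q = genusTwoKdV q₀ := funext₂ hq
  exact ⟨fun t z hz => genusTwoKdV_eq_add_two_deriv hz,
    fun t _ w hw z hz => genusTwoKdV_eq_sub_sum_roots hw hz,
    fun t z hz => genusTwoKdV_kdv hz⟩
end

section
/- Suppose q(z) = q_0 - 2Σ_{j=1}^N 𝒫(z - z_j) with 𝒫(z) = 1/z² (the rational case) and pairwise distinct z_1,…,z_N ∈ ℂ satisfying the CM locus conditions Σ_{j≠k} (z_k - z_j)^{-3} = 0 for all k. Define f_1 = c_1 + q/2. Then f_1(z) = d_1 + Σ_{k=1}^N a_{1,k} 𝒫(z - z_k) with d_1 = c_1 + q_0/2 and a_{1,k} = -1, and the function f_2 determined (up to a constant d_2) by the KdV recursion f_2' = (1/4)f_1''' + q f_1' + (1/2)q' f_1 is again of the form f_2(z) = d_2 + Σ_{k=1}^N a_{2,k} 𝒫(z - z_k) with a_{2,k}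 = -q_0 - d_1 + 3 Σ_{ℓ≠k} 𝒫(z_k - z_ℓ). -/
/-!
Away from the poles, `q`, `f₁` and the candidate `f₂` are finite sums `Σ_j c_j (u - z_j)⁻ⁿ`, whose
derivatives are again of this form. Comparing coefficients, the recursion reduces to
`Σ_k S_k (w - z_k)⁻³ = Σ_{k ≠ ℓ} (w - z_k)⁻³ (w - z_ℓ)⁻²` with `S_k = Σ_{ℓ ≠ k} (z_k - z_ℓ)⁻²`.
Expanding each summand on the right in partial fractions in `w`, the terms
`(z_k - z_ℓ)⁻³ (w - z_•)⁻²` sum to zero by the CM locus conditions and the simple-pole terms cancel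
under `k ↔ ℓ`; what remains is the left-hand side.
-/

open Finset

section Algebra

variable {K ι : Type*} [Field K] [Fintype ι] [DecidableEq ι]

theorem inv_pow_three_mul_inv_sq_partialFractions {w a b : K} (ha : w ≠ a) (hb : w ≠ b)
    (hab : a ≠ b) :
    ((w - a) ^ 3)⁻¹ * ((w - b) ^ 2)⁻¹ =
      ((a - b) ^ 2)⁻¹ * ((w - a) ^ 3)⁻¹ - 2 * (((a - b) ^ 3)⁻¹ * ((w - a) ^ 2)⁻¹)
        + ((b - a) ^ 3)⁻¹ * ((w - b) ^ 2)⁻¹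
        + (3 * ((a - b) ^ 4)⁻¹ * (w - a)⁻¹ - 3 * ((b - a) ^ 4)⁻¹ * (w - b)⁻¹) := by
  have := sub_ne_zero.2 ha
  have := sub_ne_zero.2 hb
  have := sub_ne_zero.2 hab
  have := sub_ne_zero.2 hab.symm
  field_simp
  ring

theorem sum_sum_sdiff_singleton_comm {M : Type*} [AddCommMonoid M] (g : ι → ι → M) :
    ∑ k, ∑ ℓ ∈ univ \ {k}, g ℓ k = ∑ k, ∑ ℓ ∈ univ \ {k}, g k ℓ :=
  Finset.sum_comm' (by simp [ne_comm])

theorem sum_mul_sum_eq_sum_mul_add_sum_sdiff_singleton {R : Type*} [CommSemiring R]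
    (f g : ι → R) :
    (∑ i, f i) * ∑ j, g j = ∑ i, f i * g i + ∑ i, ∑ j ∈ univ \ {i}, f i * g j := by
  rw [Fintype.sum_mul_sum, ← sum_add_distrib]
  refine sum_congr rfl fun i _ => ?_
  exact Fintype.sum_eq_add_sum_compl i _

theorem sum_sum_sdiff_inv_pow_three_mul_inv_sq {z : ι → K} (hz : Function.Injective z)
    (hCM : ∀ k, ∑ j ∈ univ \ {k}, ((z k - z j) ^ 3)⁻¹ = 0) {w : K} (hw : w ∉ Set.range z) :
    ∑ k, ∑ ℓ ∈ univ \ {k}, ((w - z k) ^ 3)⁻¹ * ((w - z ℓ) ^ 2)⁻¹ =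
      ∑ k, ∑ ℓ ∈ univ \ {k}, ((z k - z ℓ) ^ 2)⁻¹ * ((w - z k) ^ 3)⁻¹ := by
  -- `m` and `h` are kept opaque so that `sum_sum_sdiff_singleton_comm` can rewrite `m ℓ k`.
  obtain ⟨m, hm⟩ : ∃ m : ι → ι → K, ∀ k ℓ, m k ℓ = ((z k - z ℓ) ^ 3)⁻¹ * ((w - z k) ^ 2)⁻¹ :=
    ⟨_, fun _ _ => rfl⟩
  obtain ⟨h, hh⟩ : ∃ h : ι → ι → K, ∀ k ℓ, h k ℓ = 3 * ((z k - z ℓ) ^ 4)⁻¹ * (w - z k)⁻¹ :=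
    ⟨_, fun _ _ => rfl⟩
  have hm_sum : ∑ k, ∑ ℓ ∈ univ \ {k}, m k ℓ = 0 :=
    sum_eq_zero fun k _ => by simp only [hm, ← sum_mul, hCM k, zero_mul]
  calc ∑ k, ∑ ℓ ∈ univ \ {k}, ((w - z k) ^ 3)⁻¹ * ((w - z ℓ) ^ 2)⁻¹
      = ∑ k, ∑ ℓ ∈ univ \ {k},
          (((z k - z ℓ) ^ 2)⁻¹ * ((w - z k) ^ 3)⁻¹ - 2 * m k ℓ + m ℓ k + (h k ℓ - h ℓ k)) := by
        refine sum_congr rfl fun k _ => sum_congr rfl fun ℓ hℓ => ?_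
        have hkℓ : k ≠ ℓ := by simpa [eq_comm] using hℓ
        rw [hm, hm, hh, hh, inv_pow_three_mul_inv_sq_partialFractions
          (fun e => hw ⟨k, e.symm⟩) (fun e => hw ⟨ℓ, e.symm⟩) (hz.ne hkℓ)]
    _ = ∑ k, ∑ ℓ ∈ univ \ {k}, ((z k - z ℓ) ^ 2)⁻¹ * ((w - z k) ^ 3)⁻¹ := by
        simp only [sum_add_distrib, sum_sub_distrib, ← mul_sum, sum_sum_sdiff_singleton_comm m,
          sum_sum_sdiff_singleton_comm h, hm_sum]
        ring

theorem sum_sdiff_inv_sq_mul_inv_pow_three {z : ι → K} (hz : Function.Injective z)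
    (hCM : ∀ k, ∑ j ∈ univ \ {k}, ((z k - z j) ^ 3)⁻¹ = 0) {w : K} (hw : w ∉ Set.range z) :
    ∑ k, (∑ ℓ ∈ univ \ {k}, ((z k - z ℓ) ^ 2)⁻¹) * ((w - z k) ^ 3)⁻¹ =
      (∑ j, ((w - z j) ^ 3)⁻¹) * (∑ j, ((w - z j) ^ 2)⁻¹) - ∑ j, ((w - z j) ^ 5)⁻¹ := by
  rw [sum_mul_sum_eq_sum_mul_add_sum_sdiff_singleton,
    sum_sum_sdiff_inv_pow_three_mul_inv_sq hz hCM hw]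
  simp only [← mul_inv, ← pow_add, sum_mul]
  ring

end Algebra

section Derivatives

open Filter Topology

variable {𝕜 ι : Type*} [NontriviallyNormedField 𝕜] [Fintype ι]

theorem hasDerivAt_inv_sub_pow (n : ℕ) {a w : 𝕜} (hw : w ≠ a) :
    HasDerivAt (fun u => ((u - a) ^ n)⁻¹) (-n * ((w - a) ^ (n + 1))⁻¹) w := by
  have h := (hasDerivAt_zpow (-n) (w - a) (Or.inl (sub_ne_zero.2 hw))).comp_sub_const w a
  rw [show -(n : ℤ) - 1 = -((n + 1 : ℕ) : ℤ) by push_cast; ring] at h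
  simpa only [zpow_neg, zpow_natCast, Int.cast_neg, Int.cast_natCast] using h

def poleSum (z c : ι → 𝕜) (n : ℕ) (u : 𝕜) : 𝕜 := ∑ j, c j * ((u - z j) ^ n)⁻¹

theorem poleSum_const (z : ι → 𝕜) (c : 𝕜) (n : ℕ) (u : 𝕜) :
    poleSum z (fun _ => c) n u = c * ∑ j, ((u - z j) ^ n)⁻¹ :=
  (mul_sum _ _ _).symm

theorem hasDerivAt_poleSum (z c : ι → 𝕜) (n : ℕ) {w : 𝕜} (hw : w ∉ Set.range z) :
    HasDerivAt (poleSum z c n) (poleSum z (fun j => -n * c j) (n + 1) w) w := by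
  refine (HasDerivAt.fun_sum fun j _ =>
    (hasDerivAt_inv_sub_pow n fun e => hw ⟨j, e.symm⟩).const_mul (c j)).congr_deriv ?_
  exact sum_congr rfl fun j _ => by ring

theorem deriv_poleSum_eventuallyEq (z c : ι → 𝕜) (n : ℕ) {w : 𝕜} (hw : w ∉ Set.range z) :
    deriv (poleSum z c n) =ᶠ[𝓝 w] poleSum z (fun j => -n * c j) (n + 1) := by
  filter_upwards [(Set.finite_range z).isClosed.isOpen_compl.mem_nhds hw] with u hu
  exact (hasDerivAt_poleSum z c n hu).deriv

end Derivatives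

/-- In the rational case `𝒫(z) = 1/z²`, let `q(z) = q₀ - 2 Σ_j 𝒫(z - z_j)` with
pairwise distinct `z_j` satisfying the CM locus conditions
`Σ_{j≠k} (z_k - z_j)⁻³ = 0`.  With `f₁ = c₁ + q/2` one has
`f₁ = d₁ + Σ_k a_{1,k} 𝒫(z - z_k)` with `d₁ = c₁ + q₀/2`, `a_{1,k} = -1`, and
the next KdV recursion coefficient `f₂` (determined up to a constant `d₂` by
`f₂' = (1/4) f₁''' + q f₁' + (1/2) q' f₁`) is again of the form
`d₂ + Σ_k a_{2,k} 𝒫(z - z_k)` with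
`a_{2,k} = -q₀ - d₁ + 3 Σ_{ℓ≠k} 𝒫(z_k - z_ℓ)`. -/
theorem kdv_recursion_f2_rational (N : ℕ) (z : Fin N → ℂ) (hz : Function.Injective z)
    (q₀ c₁ : ℂ)
    (hCM : ∀ k : Fin N, ∑ j ∈ Finset.univ \ {k}, ((z k - z j) ^ 3)⁻¹ = 0)
    (q f₁ : ℂ → ℂ)
    (hq : ∀ w : ℂ, q w = q₀ - 2 * ∑ j : Fin N, ((w - z j) ^ 2)⁻¹)
    (hf₁ : ∀ w : ℂ, f₁ w = c₁ + q w / 2)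
    (d₁ : ℂ) (hd₁ : d₁ = c₁ + q₀ / 2)
    (a₂ : Fin N → ℂ)
    (ha₂ : ∀ k : Fin N,
      a₂ k = -q₀ - d₁ + 3 * ∑ ℓ ∈ Finset.univ \ {k}, ((z k - z ℓ) ^ 2)⁻¹) :
    -- f₁ has the asserted form
    (∀ w : ℂ, f₁ w = d₁ + ∑ k : Fin N, (-1 : ℂ) * ((w - z k) ^ 2)⁻¹) ∧
    -- f₂ := d₂ + Σ_k a_{2,k} 𝒫(· - z_k) satisfies the KdV recursion away from the poles
    (∀ w : ℂ, w ∉ Set.range z →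
      deriv (fun u => ∑ k : Fin N, a₂ k * ((u - z k) ^ 2)⁻¹) w =
        (1 / 4) * deriv (fun u => deriv (fun u' => deriv f₁ u') u) w
          + q w * deriv f₁ w + (1 / 2) * deriv q w * f₁ w) := by
  have hf₁_form (w : ℂ) : f₁ w = d₁ + ∑ k : Fin N, (-1 : ℂ) * ((w - z k) ^ 2)⁻¹ := by
    rw [hf₁, hq, hd₁, ← mul_sum]
    ring
  refine ⟨hf₁_form, fun w hw => ?_⟩
  have hq_eq : q = fun u => q₀ + poleSum z (fun _ => -2) 2 u :=
    funext fun u => by rw [hq, poleSum_const]; ring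
  have hf₁_eq : f₁ = fun u => d₁ + poleSum z (fun _ => -1) 2 u := funext hf₁_form
  have hf₁' := deriv_poleSum_eventuallyEq z (fun _ => -1) 2 hw
  rw [← deriv_const_add' d₁, ← hf₁_eq] at hf₁'
  have hf₁'' := hf₁'.deriv.trans (deriv_poleSum_eventuallyEq z _ _ hw)
  have hf₁''' := hf₁''.deriv_eq.trans (hasDerivAt_poleSum z _ _ hw).deriv
  have hdq : deriv q w = poleSum z (fun _ => -(2 : ℕ) * -2) 3 w := by
    rw [hq_eq, deriv_const_add, (hasDerivAt_poleSum z _ 2 hw).deriv]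
  have hf₂ : poleSum z (fun j => -(2 : ℕ) * a₂ j) 3 w = 2 * (q₀ + d₁) * ∑ j, ((w - z j) ^ 3)⁻¹
      - 6 * ∑ k, (∑ ℓ ∈ univ \ {k}, ((z k - z ℓ) ^ 2)⁻¹) * ((w - z k) ^ 3)⁻¹ := by
    simp only [poleSum, ha₂, mul_sum (s := univ), ← sum_sub_distrib]
    exact sum_congr rfl fun k _ => by push_cast; ring
  change deriv (poleSum z a₂ 2) w =
    1 / 4 * deriv (deriv (deriv f₁)) w + q w * deriv f₁ w + 1 / 2 * deriv q w * f₁ w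
  rw [(hasDerivAt_poleSum z a₂ 2 hw).deriv, hf₂, sum_sdiff_inv_sq_mul_inv_pow_three hz hCM hw,
    hf₁''', hf₁'.eq_of_nhds, hdq, hq, hf₁_form, ← mul_sum]
  simp only [poleSum_const]
  push_cast
  ring
end
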